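/- Each of the following three vectors lies in Γ^∨, satisfies ⟨K, ρ⟩ = −5, and admits the indicated representation as a nonnegative integer combination of elements of 𝒜 (hence lies in cone(𝒜)): ρ₂₁ := 2e_L + e_{25} + e_{35} + e_{45} = A_{12} + A_{13} + B_{126} + B_{136} + B_{246} + B_{346} + B_{456}; ρ₂₂ := 3e_L + 2e_{15} + e_{24} + e_{25} + 2e_{34} + e_{45} = A_{15} + A_{23} + A_{34} + B_{126} + B_{146} + B_{156} + 2B_{236}; ρ₂₃ := 4e_L + 2e_5 + e_{13} + e_{14} + e_{15} + 2e_{23} + 2e_{24} = A_{13;5} + A_{14;5} + A_{23} + A_{13} + B_{256} + 2B_{456}. (These are the anticanonical-degree-5 representatives of the 𝔖₆-orbits of coextremal rays of M̄_{0,6}.) -/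
import Mathlib


noncomputable section

/-- Index in `Fin 16` of the exceptional class `E_{ab}` attached to a pair of points
(points written `0`-based as elements of `Fin 5`, assuming `a < b`):
`(0,1) ↦ 6, (0,2) ↦ 7, …, (3,4) ↦ 15`. -/
def pairIdx : ℕ → ℕ → Fin 16
  | 0, 1 => 6
  | 0, 2 => 7
  | 0, 3 => 8
  | 0, 4 => 9
  | 1, 2 => 10
  | 1, 3 => 11
  | 1, 4 => 12
  | 2, 3 => 13
  | 2, 4 => 14
  | 3, 4 => 15
  | _, _ => 0

/-- The coordinate vector `e_L` (the class `L`). -/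
def eL : Fin 16 → ℝ := Pi.single 0 1

/-- The coordinate vector `e_i` for the point `i ∈ {1,…,5}` (represented `0`-based
by `i : Fin 5`). -/
def eP (i : Fin 5) : Fin 16 → ℝ := Pi.single ⟨i.val + 1, by omega⟩ 1

/-- The coordinate vector `e_{ab}` for a 2-element subset `{a,b} ⊂ {1,…,5}`
(represented `0`-based); symmetric in `a` and `b`. -/
def eE (a b : Fin 5) : Fin 16 → ℝ :=
  Pi.single (if a.val < b.val then pairIdx a.val b.val else pairIdx b.val a.val) 1

/-- The standard inner product on `ℝ¹⁶`. -/
def ip (x y : Fin 16 → ℝ) : ℝ := ∑ i, x i * y i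

def Distinct3 (k l m : Fin 5) : Prop := k ≠ l ∧ k ≠ m ∧ l ≠ m

def Distinct5 (i j k l m : Fin 5) : Prop :=
  i ≠ j ∧ i ≠ k ∧ i ≠ l ∧ i ≠ m ∧ j ≠ k ∧ j ≠ l ∧ j ≠ m ∧ k ≠ l ∧ k ≠ m ∧ l ≠ m

/-- The 40 classes: 25 boundary divisors and 15 fixed-point divisors `F_σ` of `M̄₀₆`. -/
def Gamma : Set (Fin 16 → ℝ) :=
  {v | (∃ i : Fin 5, v = eP i) ∨
       (∃ a b : Fin 5, a ≠ b ∧ v = eE a b) ∨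
       (∃ k l m : Fin 5, Distinct3 k l m ∧
          v = eL - eP k - eP l - eP m - eE k l - eE k m - eE l m) ∨
       (∃ j a b c d : Fin 5, Distinct5 j a b c d ∧
          v = (2 : ℝ) • eL - (∑ i, eP i) - eE a c - eE a d - eE b c - eE b d)}

/-- The dual cone `Γ^∨ = {v : ⟨g,v⟩ ≥ 0 for all g ∈ Γ}`. -/
def GammaDual : Set (Fin 16 → ℝ) := {v | ∀ gv ∈ Gamma, 0 ≤ ip gv v}
/-- `B_{ab6} = -e_{ab}` for a pair `{a,b} ⊂ {1,…,5}`. -/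
def B6 (a b : Fin 5) : Fin 16 → ℝ := -(eE a b)

/-- `B_{ijk} = e_L + e_a + e_b - e_{ab}` for a 3-element `{i,j,k} ⊂ {1,…,5}`
with complement `{a,b}`. -/
def Bv (i j k a b : Fin 5) : Fin 16 → ℝ := eL + eP a + eP b - eE a b

/-- `A_{ij} = e_L + e_{ij} + e_{kl} + e_{km} + e_{lm}` for a pair `{i,j} ⊂ {1,…,5}`
with complement `{k,l,m}`. -/
def A2 (i j k l m : Fin 5) : Fin 16 → ℝ := eL + eE i j + eE k l + eE k m + eE l m

/-- `A_{i6} = -2e_i + Σ_{j≠i} e_{ij}`. -/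
def A6 (i : Fin 5) : Fin 16 → ℝ :=
  -((2 : ℝ) • eP i) + ∑ j, if j ≠ i then eE i j else 0

/-- `A_{ij;k} = e_L + e_k + e_{ab}` for distinct `i,j,k ∈ {1,…,5}`
with `{a,b}` the complement of `{i,j,k}`. -/
def A3 (i j k a b : Fin 5) : Fin 16 → ℝ := eL + eP k + eE a b

/-- `A_{ij;6} = 2e_L + e_k + e_l + e_m + e_{ij}` for a pair `{i,j} ⊂ {1,…,5}`
with complement `{k,l,m}`. -/
def A36 (i j k l m : Fin 5) : Fin 16 → ℝ := (2 : ℝ) • eL + eP k + eP l + eP m + eE i j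

/-- `A_{i6;k} = -e_i + e_{ik}` for distinct `i,k ∈ {1,…,5}`. -/
def A63 (i k : Fin 5) : Fin 16 → ℝ := -(eP i) + eE i k

/-- The set `𝒜` of 95 vectors: pushforwards of the generators of the nef curve cones
of the boundary divisors of `M̄₀₆`. -/
def Aset : Set (Fin 16 → ℝ) :=
  {v | (∃ a b, a ≠ b ∧ v = B6 a b) ∨
       (∃ i j k a b, Distinct5 i j k a b ∧ v = Bv i j k a b) ∨
       (∃ i j k l m, Distinct5 i j k l m ∧ v = A2 i j k l m) ∨
       (∃ i, v = A6 i) ∨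
       (∃ i j k a b, Distinct5 i j k a b ∧ v = A3 i j k a b) ∨
       (∃ i j k l m, Distinct5 i j k l m ∧ v = A36 i j k l m) ∨
       (∃ i k, i ≠ k ∧ v = A63 i k)}

/-- The convex cone generated by a set: all finite nonnegative combinations. -/
def coneGen (S : Set (Fin 16 → ℝ)) : Set (Fin 16 → ℝ) :=
  {v | ∃ (n : ℕ) (c : Fin n → ℝ) (x : Fin n → (Fin 16 → ℝ)),
      (∀ t, 0 ≤ c t) ∧ (∀ t, x t ∈ S) ∧ v = ∑ t, c t • x t}
/-- The canonical class `K = -4e_L + 2(e_1 + ⋯ + e_5) + Σ_{{a,b}} e_{ab}` of `M̄₀₆`. -/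
def Kcl : Fin 16 → ℝ :=
  -((4 : ℝ) • eL) + (2 : ℝ) • (∑ i, eP i) +
    ∑ a : Fin 5, ∑ b : Fin 5, if a < b then eE a b else 0
/-- `ρ₂₁ = 2e_L + e₂₅ + e₃₅ + e₄₅`. -/
def ρ₂₁ : Fin 16 → ℝ := (2 : ℝ) • eL + eE 1 4 + eE 2 4 + eE 3 4

/-- `ρ₂₂ = 3e_L + 2e₁₅ + e₂₄ + e₂₅ + 2e₃₄ + e₄₅`. -/
def ρ₂₂ : Fin 16 → ℝ :=
  (3 : ℝ) • eL + (2 : ℝ) • eE 0 4 + eE 1 3 + eE 1 4 + (2 : ℝ) • eE 2 3 + eE 3 4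

/-- `ρ₂₃ = 4e_L + 2e₅ + e₁₃ + e₁₄ + e₁₅ + 2e₂₃ + 2e₂₄`. -/
def ρ₂₃ : Fin 16 → ℝ :=
  (4 : ℝ) • eL + (2 : ℝ) • eP 4 + eE 0 2 + eE 0 3 + eE 0 4 +
    (2 : ℝ) • eE 1 2 + (2 : ℝ) • eE 1 3

namespace Deg5Aux

def pidx (i : Fin 5) : Fin 16 := ⟨i.val + 1, by omega⟩

def eidx (a b : Fin 5) : Fin 16 :=
  if a.val < b.val then pairIdx a.val b.val else pairIdx b.val a.val

lemma ip_single (j : Fin 16) (c : ℝ) (v : Fin 16 → ℝ) :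
    ip (Pi.single j c) v = c * v j := by
  rw [ip, Finset.sum_eq_single j]
  · simp
  · intro b _ hb; simp [Pi.single_apply, hb]
  · simp

lemma ip_add (x y v : Fin 16 → ℝ) : ip (x + y) v = ip x v + ip y v := by
  simp [ip, add_mul, Finset.sum_add_distrib]

lemma ip_sub (x y v : Fin 16 → ℝ) : ip (x - y) v = ip x v - ip y v := by
  simp [ip, sub_mul, Finset.sum_sub_distrib]

lemma ip_neg (x v : Fin 16 → ℝ) : ip (-x) v = -ip x v := by
  simp [ip]

lemma ip_smul (c : ℝ) (x v : Fin 16 → ℝ) : ip (c • x) v = c * ip x v := by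
  simp [ip, Finset.mul_sum, mul_assoc]

lemma ip_sum {n : ℕ} (f : Fin n → (Fin 16 → ℝ)) (v : Fin 16 → ℝ) :
    ip (∑ t, f t) v = ∑ t, ip (f t) v := by
  simp only [ip, Finset.sum_apply, Finset.sum_mul]
  exact Finset.sum_comm

lemma ip_eL (v : Fin 16 → ℝ) : ip eL v = v 0 := by
  rw [eL, ip_single, one_mul]

lemma ip_eP (i : Fin 5) (v : Fin 16 → ℝ) : ip (eP i) v = v (pidx i) := by
  rw [eP, ip_single, one_mul]; rfl

lemma ip_eE (a b : Fin 5) (v : Fin 16 → ℝ) : ip (eE a b) v = v (eidx a b) := by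
  rw [eE, ip_single, one_mul]; rfl

lemma mem_dual (w : Fin 16 → ℤ)
    (h0 : ∀ j, 0 ≤ w j)
    (h3 : ∀ k l m : Fin 5, k ≠ l → k ≠ m → l ≠ m →
      0 ≤ w 0 - w (pidx k) - w (pidx l) - w (pidx m)
        - w (eidx k l) - w (eidx k m) - w (eidx l m))
    (h4 : ∀ a b c d : Fin 5, (a ≠ b ∧ a ≠ c ∧ a ≠ d ∧ b ≠ c ∧ b ≠ d ∧ c ≠ d) →
      0 ≤ 2 * w 0 - (∑ i, w (pidx i))
        - w (eidx a c) - w (eidx a d) - w (eidx b c) - w (eidx b d)) :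
    (fun j => (w j : ℝ)) ∈ GammaDual := by
  intro gv hgv
  rcases hgv with ⟨i, rfl⟩ | ⟨a, b, hab, rfl⟩ | ⟨k, l, m, ⟨hkl, hkm, hlm⟩, rfl⟩ |
    ⟨j, a, b, c, d, ⟨_, _, _, _, hab, hac, had, hbc, hbd, hcd⟩, rfl⟩
  · rw [ip_eP]; exact_mod_cast h0 _
  · rw [ip_eE]; exact_mod_cast h0 _
  · simp only [ip_sub, ip_eL, ip_eP, ip_eE]
    exact_mod_cast h3 k l m hkl hkm hlm
  · simp only [ip_sub, ip_smul, ip_eL, ip_sum, ip_eP, ip_eE]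
    exact_mod_cast h4 a b c d ⟨hab, hac, had, hbc, hbd, hcd⟩

lemma ip_cast (x y : Fin 16 → ℤ) :
    ip (fun j => (x j : ℝ)) (fun j => (y j : ℝ)) = ((∑ j, x j * y j : ℤ) : ℝ) := by
  rw [ip]; push_cast; rfl

lemma fv0 : ((0:Fin 5):ℕ) = 0 := rfl
lemma fv1 : ((1:Fin 5):ℕ) = 1 := rfl
lemma fv2 : ((2:Fin 5):ℕ) = 2 := rfl
lemma fv3 : ((3:Fin 5):ℕ) = 3 := rfl
lemma fv4 : ((4:Fin 5):ℕ) = 4 := rfl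

def w1 : Fin 16 → ℤ := ![2,0,0,0,0,0,0,0,0,0,0,0,1,0,1,1]
def w2 : Fin 16 → ℤ := ![3,0,0,0,0,0,0,0,0,2,0,1,1,2,0,1]
def w3 : Fin 16 → ℤ := ![4,0,0,0,0,2,0,1,1,1,2,2,0,0,0,0]
def wK : Fin 16 → ℤ := ![-4,2,2,2,2,2,1,1,1,1,1,1,1,1,1,1]

lemma hr1 : ρ₂₁ = fun j => (w1 j : ℝ) := by
  funext j
  fin_cases j <;>
    simp (config := { decide := true }) [ρ₂₁, eL, eE, pairIdx, Pi.single_apply, fv0, fv1, fv2, fv3, fv4] <;> norm_cast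

set_option maxHeartbeats 2000000 in
lemma hK : Kcl = fun j => (wK j : ℝ) := by
  funext j
  fin_cases j <;>
    simp (config := { decide := true }) [Kcl, eL, eP, eE, pairIdx, Pi.single_apply, Fin.sum_univ_succ, fv0, fv1, fv2, fv3, fv4] <;> norm_cast

lemma hr2 : ρ₂₂ = fun j => (w2 j : ℝ) := by
  funext j
  fin_cases j <;>
    simp (config := { decide := true }) [ρ₂₂, eL, eE, pairIdx, Pi.single_apply, fv0, fv1, fv2, fv3, fv4] <;> norm_cast

lemma hr3 : ρ₂₃ = fun j => (w3 j : ℝ) := by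
  funext j
  fin_cases j <;>
    simp (config := { decide := true }) [ρ₂₃, eL, eP, eE, pairIdx, Pi.single_apply, fv0, fv1, fv2, fv3, fv4] <;> norm_cast

set_option maxHeartbeats 1000000 in
lemma dec1 : A2 0 1 2 3 4 + A2 0 2 1 3 4 + B6 0 1 + B6 0 2 + B6 1 3 + B6 2 3 + B6 3 4
    = fun j => (w1 j : ℝ) := by
  funext j
  fin_cases j <;>
    simp (config := { decide := true }) [A2, B6, eL, eP, eE, pairIdx, Pi.single_apply, fv0, fv1, fv2, fv3, fv4] <;> norm_cast

set_option maxHeartbeats 1000000 in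
lemma dec2 : A2 0 4 1 2 3 + A2 1 2 0 3 4 + A2 2 3 0 1 4 +
      B6 0 1 + B6 0 3 + B6 0 4 + (2 : ℝ) • B6 1 2 = fun j => (w2 j : ℝ) := by
  funext j
  fin_cases j <;>
    simp (config := { decide := true }) [A2, B6, eL, eP, eE, pairIdx, Pi.single_apply, fv0, fv1, fv2, fv3, fv4] <;> norm_cast

set_option maxHeartbeats 1000000 in
lemma dec3 : A3 0 2 4 1 3 + A3 0 3 4 1 2 + A2 1 2 0 3 4 + A2 0 2 1 3 4 +
      B6 1 4 + (2 : ℝ) • B6 3 4 = fun j => (w3 j : ℝ) := by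
  funext j
  fin_cases j <;>
    simp (config := { decide := true }) [A2, A3, B6, eL, eP, eE, pairIdx, Pi.single_apply, fv0, fv1, fv2, fv3, fv4] <;> norm_cast

lemma mem_B6 {a b : Fin 5} (h : a ≠ b) : B6 a b ∈ Aset := Or.inl ⟨a, b, h, rfl⟩

lemma mem_A2 {i j k l m : Fin 5} (h : Distinct5 i j k l m) : A2 i j k l m ∈ Aset :=
  Or.inr (Or.inr (Or.inl ⟨i, j, k, l, m, h, rfl⟩))

lemma mem_A3 {i j k a b : Fin 5} (h : Distinct5 i j k a b) : A3 i j k a b ∈ Aset :=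
  Or.inr (Or.inr (Or.inr (Or.inr (Or.inl ⟨i, j, k, a, b, h, rfl⟩))))

lemma d5 {i j k l m : Fin 5}
    (h : i ≠ j ∧ i ≠ k ∧ i ≠ l ∧ i ≠ m ∧ j ≠ k ∧ j ≠ l ∧ j ≠ m ∧ k ≠ l ∧ k ≠ m ∧ l ≠ m) :
    Distinct5 i j k l m := h

lemma dual1 : ρ₂₁ ∈ GammaDual := by
  rw [hr1]; exact mem_dual w1 (by decide) (by decide) (by decide)

lemma dual2 : ρ₂₂ ∈ GammaDual := by
  rw [hr2]; exact mem_dual w2 (by decide) (by decide) (by decide)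

lemma dual3 : ρ₂₃ ∈ GammaDual := by
  rw [hr3]; exact mem_dual w3 (by decide) (by decide) (by decide)

end Deg5Aux



open Deg5Aux in
/-- The degree-5 coextremal representatives lie in `Γ^∨`, have `⟨K,ρ⟩ = -5`, and
decompose as stated in the paper; hence each lies in `cone(𝒜)`. -/
theorem deg5_coextremal_decompositions :
    (ρ₂₁ ∈ GammaDual ∧ ip Kcl ρ₂₁ = -5 ∧
      ρ₂₁ = A2 0 1 2 3 4 + A2 0 2 1 3 4 + B6 0 1 + B6 0 2 + B6 1 3 + B6 2 3 + B6 3 4 ∧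
      ρ₂₁ ∈ coneGen Aset) ∧
    (ρ₂₂ ∈ GammaDual ∧ ip Kcl ρ₂₂ = -5 ∧
      ρ₂₂ = A2 0 4 1 2 3 + A2 1 2 0 3 4 + A2 2 3 0 1 4 +
        B6 0 1 + B6 0 3 + B6 0 4 + (2 : ℝ) • B6 1 2 ∧
      ρ₂₂ ∈ coneGen Aset) ∧
    (ρ₂₃ ∈ GammaDual ∧ ip Kcl ρ₂₃ = -5 ∧
      ρ₂₃ = A3 0 2 4 1 3 + A3 0 3 4 1 2 + A2 1 2 0 3 4 + A2 0 2 1 3 4 +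
        B6 1 4 + (2 : ℝ) • B6 3 4 ∧
      ρ₂₃ ∈ coneGen Aset) := by
  constructor
  · refine ⟨dual1, ?_, ?_, ?_⟩
    · rw [hK, hr1, ip_cast]
      norm_num [show (∑ j, wK j * w1 j : ℤ) = -5 from by decide]
    · exact hr1.trans dec1.symm
    · refine ⟨7, fun _ => 1,
        ![A2 0 1 2 3 4, A2 0 2 1 3 4, B6 0 1, B6 0 2, B6 1 3, B6 2 3, B6 3 4],
        fun t => zero_le_one, ?_, ?_⟩
      · intro t
        fin_cases t
        exacts [mem_A2 (d5 (by decide)), mem_A2 (d5 (by decide)), mem_B6 (by decide),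
          mem_B6 (by decide), mem_B6 (by decide), mem_B6 (by decide), mem_B6 (by decide)]
      · rw [hr1.trans dec1.symm]
        simp [Fin.sum_univ_succ]
        abel
  constructor
  · refine ⟨dual2, ?_, ?_, ?_⟩
    · rw [hK, hr2, ip_cast]
      norm_num [show (∑ j, wK j * w2 j : ℤ) = -5 from by decide]
    · exact hr2.trans dec2.symm
    · refine ⟨7, ![1, 1, 1, 1, 1, 1, 2],
        ![A2 0 4 1 2 3, A2 1 2 0 3 4, A2 2 3 0 1 4, B6 0 1, B6 0 3, B6 0 4, B6 1 2],
        ?_, ?_, ?_⟩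
      · intro t; fin_cases t <;> norm_num
      · intro t
        fin_cases t
        exacts [mem_A2 (d5 (by decide)), mem_A2 (d5 (by decide)), mem_A2 (d5 (by decide)),
          mem_B6 (by decide), mem_B6 (by decide), mem_B6 (by decide), mem_B6 (by decide)]
      · rw [hr2.trans dec2.symm]
        simp [Fin.sum_univ_succ]
        abel
  · refine ⟨dual3, ?_, ?_, ?_⟩
    · rw [hK, hr3, ip_cast]
      norm_num [show (∑ j, wK j * w3 j : ℤ) = -5 from by decide]
    · exact hr3.trans dec3.symm
    · refine ⟨6, ![1, 1, 1, 1, 1, 2],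
        ![A3 0 2 4 1 3, A3 0 3 4 1 2, A2 1 2 0 3 4, A2 0 2 1 3 4, B6 1 4, B6 3 4],
        ?_, ?_, ?_⟩
      · intro t; fin_cases t <;> norm_num
      · intro t
        fin_cases t
        exacts [mem_A3 (i:=0) (j:=2) (d5 (by decide)), mem_A3 (i:=0) (j:=3) (d5 (by decide)), mem_A2 (d5 (by decide)),
          mem_A2 (d5 (by decide)), mem_B6 (by decide), mem_B6 (by decide)]
      · rw [hr3.trans dec3.symm]
        simp [Fin.sum_univ_succ]
        abel
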